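/- With notation as above, the array N_l (listing string indices sorted by their l-suffixes) equals the concatenation Π_{c_0}(N_{l-1}) · Π_{c_1}(N_{l-1}) · ... · Π_{c_σ}(N_{l-1}), where c_0 < c_1 < ... < c_σ is the ordered alphabet. -/

import Mathlib

/-!
Write `p = k - l` for the position at which the `l`-suffix starts, so that the `l`-suffix of a
string is its symbol at `p` followed by its `(l-1)`-suffix. Comparing `l`-suffixes therefore
compares first the symbols at `p` and, on a tie, the `(l-1)`-suffixes. Concatenating the
projections `Π_c(N_{l-1})` in increasing order of `c` is thus a stable bucket sort of `N_{l-1}`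
by the symbol at `p`: it is a permutation of the indices and it is sorted by `l`-suffixes. As
the order on indices is strict and total, a sorted permutation is unique, and it is `N_l`.
-/

/-- Strict order on string indices given by comparing the `l`-suffixes of the
corresponding strings lexicographically, with ties broken by string index. -/
def suffOrd {A : Type*} [LinearOrder A] {m k : ℕ} (s : Fin m → Fin k → A)
    (l : ℕ) (q q' : Fin m) : Prop :=
  List.Lex (· < ·) ((List.ofFn (s q)).drop (k - l)) ((List.ofFn (s q')).drop (k - l)) ∨
    ((List.ofFn (s q)).drop (k - l) = (List.ofFn (s q')).drop (k - l) ∧ (q : ℕ) < (q' : ℕ))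

namespace List

variable {α β : Type*}

theorem drop_ofFn_eq_cons {n : ℕ} (f : Fin n → α) {i : ℕ} (hi : i < n) :
    (ofFn f).drop i = f ⟨i, hi⟩ :: (ofFn f).drop (i + 1) := by
  rw [drop_eq_getElem_cons (by simpa using hi), List.getElem_ofFn]

theorem perm_flatten_map_filter_beq [DecidableEq β] (L : List α) (f : α → β) {cs : List β}
    (hcs : cs.Nodup) (hf : ∀ a ∈ L, f a ∈ cs) :
    L ~ (cs.map fun c => L.filter (f · == c)).flatten := by
  induction cs generalizing L with
  | nil => simp_all [eq_nil_iff_forall_not_mem]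
  | cons c cs ih =>
    obtain ⟨hc, hcs⟩ := nodup_cons.mp hcs
    have hrest : (cs.map fun c' => (L.filter (f · != c)).filter (f · == c')) =
        cs.map fun c' => L.filter (f · == c') := by
      refine map_congr_left fun c' hc' => ?_
      rw [filter_filter]
      exact filter_congr fun a _ => by grind
    have hperm := ih (L.filter (f · != c)) hcs (by grind)
    rw [hrest] at hperm
    rw [map_cons, flatten_cons]
    exact (filter_append_perm _ L).symm.trans (hperm.append_left _)

theorem Pairwise.flatten_map_filter_beq [DecidableEq β] {R S : α → α → Prop}
    {T : β → β → Prop} {L : List α} {f : α → β} {cs : List β} (hL : L.Pairwise R)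
    (hcs : cs.Pairwise T) (hR : ∀ x y, f x = f y → R x y → S x y)
    (hT : ∀ x y, T (f x) (f y) → S x y) :
    (cs.map fun c => L.filter (f · == c)).flatten.Pairwise S := by
  simp only [pairwise_flatten, mem_map, forall_exists_index, and_imp, forall_apply_eq_imp_iff₂,
    pairwise_map, mem_filter, beq_iff_eq]
  refine ⟨fun c _ => (hL.filter _).imp_of_mem fun hx hy => ?_, hcs.imp ?_⟩
  · simp only [mem_filter, beq_iff_eq] at hx hy
    exact hR _ _ (hx.2.trans hy.2.symm)
  · rintro c c' h x - rfl y - rfl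
    exact hT x y h

end List

section suffOrd

variable {A : Type*} {m k : ℕ} (s : Fin m → Fin k → A)

theorem suffix_succ_eq_cons {l : ℕ} (hl : l < k) (q : Fin m) :
    (List.ofFn (s q)).drop (k - (l + 1)) =
      s q ⟨k - (l + 1), by omega⟩ :: (List.ofFn (s q)).drop (k - l) := by
  rw [List.drop_ofFn_eq_cons _ (by omega)]
  congr 2
  omega

variable [LinearOrder A]

theorem suffOrd_asymm {l : ℕ} {q q' : Fin m} (h : suffOrd s l q q') : ¬ suffOrd s l q' q := by
  rintro (h' | ⟨he', h'⟩) <;> rcases h with h | ⟨he, h⟩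
  · exact asymm h h'
  · exact irrefl _ (he ▸ h')
  · exact irrefl _ (he' ▸ h)
  · omega

instance (l : ℕ) : Std.Antisymm (suffOrd s l) :=
  ⟨fun _ _ h h' => absurd h' (suffOrd_asymm s h)⟩

theorem suffOrd_succ_of_lt {l : ℕ} (hl : l < k) {q q' : Fin m}
    (h : s q ⟨k - (l + 1), by omega⟩ < s q' ⟨k - (l + 1), by omega⟩) :
    suffOrd s (l + 1) q q' := by
  left
  rw [suffix_succ_eq_cons s hl, suffix_succ_eq_cons s hl]
  exact .rel h

theorem suffOrd_succ_of_eq {l : ℕ} (hl : l < k) {q q' : Fin m}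
    (h : s q ⟨k - (l + 1), by omega⟩ = s q' ⟨k - (l + 1), by omega⟩)
    (hqq' : suffOrd s l q q') : suffOrd s (l + 1) q q' := by
  rw [suffOrd, suffix_succ_eq_cons s hl, suffix_succ_eq_cons s hl, h]
  rcases hqq' with hlex | ⟨he, hlt⟩
  · exact .inl (.cons hlex)
  · exact .inr ⟨by rw [he], hlt⟩

end suffOrd

/-- Over the ordered alphabet `c_0 < c_1 < … < c_σ` (here `Fin (σ+1)`,
with `c_0 = 0` the sentinel, not occurring in the strings), let `Nprev` be the array of
string indices sorted by their `(l-1)`-suffixes and `Nl` the array of string indices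
sorted by their `l`-suffixes (ties by index).  Then `Nl` equals the concatenation
`Π_{c_0}(Nprev) · Π_{c_1}(Nprev) · ⋯ · Π_{c_σ}(Nprev)`, where `Π_c(Nprev)` is the
subsequence of `Nprev` at positions whose `(l-1)`-suffix is preceded by the symbol `c`. -/
theorem Nl_eq_concat_of_projections {m k σ : ℕ}
    (s : Fin m → Fin k → Fin (σ + 1))
    (l : ℕ) (hl1 : 1 ≤ l) (hlk : l ≤ k)
    (Nprev : List (Fin m)) (hperm : Nprev.Perm (Finset.univ : Finset (Fin m)).toList)
    (hsort : Nprev.Pairwise (suffOrd s (l - 1)))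
    (Nl : List (Fin m)) (hperm' : Nl.Perm (Finset.univ : Finset (Fin m)).toList)
    (hsort' : Nl.Pairwise (suffOrd s l)) :
    Nl = ((List.finRange (σ + 1)).map
      (fun c => Nprev.filter (fun q => s q ⟨k - l, by omega⟩ == c))).flatten := by
  obtain ⟨l, rfl⟩ : ∃ l', l = l' + 1 := ⟨l - 1, by omega⟩
  rw [Nat.add_sub_cancel] at hsort
  have hbuckets := List.perm_flatten_map_filter_beq Nprev (fun q => s q ⟨k - (l + 1), by omega⟩)
    (List.nodup_finRange _) (fun _ _ => List.mem_finRange _)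
  have hsorted := hsort.flatten_map_filter_beq (List.pairwise_lt_finRange _)
    (fun _ _ => suffOrd_succ_of_eq s hlk) (fun _ _ => suffOrd_succ_of_lt s hlk)
  exact (hperm'.trans (hperm.symm.trans hbuckets)).eq_of_pairwise' hsort' hsorted
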